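/- arXiv:2408.13260 — 2 statements merged into one kernel-verified Lean document; each statement's English description precedes it below -/
import Mathlib

section
/- For a complete fuzzy graph K_n (where μ(u,v) = min(σ(u), σ(v)) for all u ≠ v, n ≥ 2), γ_snR(K_n) = 2·min{μ_s(v) : v ∈ V}. -/
noncomputable section
open scoped Classical
open Finset

/-- A fuzzy graph on a vertex set `V`. -/
structure FuzzyGraph (V : Type*) where
  σ : V → ℝ
  μ : V → V → ℝ
  σ_nonneg : ∀ v, 0 ≤ σ v
  σ_le_one : ∀ v, σ v ≤ 1
  μ_nonneg : ∀ u v, 0 ≤ μ u v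
  μ_symm : ∀ u v, μ u v = μ v u
  μ_le : ∀ u v, μ u v ≤ min (σ u) (σ v)
  μ_irrefl : ∀ v, μ v v = 0

namespace FuzzyGraph

variable {V : Type*} (G : FuzzyGraph V)

/-- The strength of a walk (given as its list of vertices): the minimum
membership value of its edges (1 for walks without edges). -/
def walkStrength (l : List V) : ℝ :=
  ((l.zip l.tail).map fun p => G.μ p.1 p.2).foldr min 1

/-- `l` is a `u`–`v` walk: it starts at `u`, ends at `v`, and consecutive
vertices are joined by edges of positive membership. -/
def IsWalk (u v : V) (l : List V) : Prop :=
  l.head? = some u ∧ l.getLast? = some v ∧ l.Chain' (fun a b => 0 < G.μ a b)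

/-- `CONN_G(u,v)`: the maximum strength over all `u`–`v` paths. -/
def conn (u v : V) : ℝ :=
  sSup {s | ∃ l : List V, G.IsWalk u v l ∧ 2 ≤ l.length ∧ s = G.walkStrength l}

/-- The edge `(u,v)` is strong. -/
def StrongEdge (u v : V) : Prop :=
  0 < G.μ u v ∧ G.μ u v = G.conn u v

/-- `μ_s(u)`: the minimum membership value among strong edges at `u`
(`0` if `u` has no strong neighbor, via `Real.sInf_empty`). -/
def mus (u : V) : ℝ :=
  sInf {x | ∃ v, G.StrongEdge u v ∧ x = G.μ u v}

/-- The strong neighborhood degree `d_SN(v)`. -/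
def dSN [Fintype V] (v : V) : ℝ :=
  ∑ u ∈ Finset.univ.filter (fun u => G.StrongEdge v u), G.σ u

/-- `D` is a strong dominating set. -/
def IsStrongDomSet (D : Finset V) : Prop :=
  ∀ v, v ∉ D → ∃ u ∈ D, G.StrongEdge v u

/-- The weight of a strong dominating set. -/
def domWeight (D : Finset V) : ℝ := ∑ u ∈ D, G.mus u

/-- The strong domination number `γ_s(G)`. -/
def gammaS [Fintype V] : ℝ :=
  sInf {w | ∃ D : Finset V, G.IsStrongDomSet D ∧ w = G.domWeight D}

/-- `f` is a strong-neighbors Roman dominating function (SNRDF). -/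
def IsSNRDF (f : V → ℕ) : Prop :=
  (∀ v, f v ≤ 2) ∧ ∀ v, f v = 0 → ∃ u, G.StrongEdge v u ∧ f u = 2

/-- The weight of an SNRDF. -/
def snrdfWeight [Fintype V] (f : V → ℕ) : ℝ := ∑ v, (f v : ℝ) * G.mus v

/-- The strong-neighbors Roman domination number `γ_snR(G)`. -/
def gammaSnR [Fintype V] : ℝ :=
  sInf {w | ∃ f : V → ℕ, G.IsSNRDF f ∧ w = G.snrdfWeight f}

/-- The fuzzy subgraph induced by the vertices satisfying `p`. -/
def induce (p : V → Prop) : FuzzyGraph {v // p v} where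
  σ v := G.σ v
  μ u v := G.μ u v
  σ_nonneg v := G.σ_nonneg v
  σ_le_one v := G.σ_le_one v
  μ_nonneg u v := G.μ_nonneg u v
  μ_symm u v := G.μ_symm u v
  μ_le u v := G.μ_le u v
  μ_irrefl v := G.μ_irrefl v

/-- The minimum membership value among the strong edges of `G`. -/
def muMin : ℝ := sInf {x | ∃ u v, G.StrongEdge u v ∧ x = G.μ u v}

/-- The complement of a fuzzy graph. -/
def compl : FuzzyGraph V where
  σ := G.σ
  μ u v := if u = v then 0 else min (G.σ u) (G.σ v) - G.μ u v
  σ_nonneg := G.σ_nonneg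
  σ_le_one := G.σ_le_one
  μ_nonneg u v := by
    by_cases h : u = v
    · simp [h]
    · simp only [if_neg h, sub_nonneg]
      exact G.μ_le u v
  μ_symm u v := by
    by_cases h : u = v
    · simp [h]
    · have h' : ¬ v = u := fun hh => h hh.symm
      simp only [if_neg h, if_neg h', min_comm (G.σ u), G.μ_symm u v]
  μ_le u v := by
    by_cases h : u = v
    · subst h
      simp only [if_pos rfl, le_min_iff]
      exact ⟨G.σ_nonneg u, G.σ_nonneg u⟩
    · simp only [if_neg h]
      have := G.μ_nonneg u v
      linarith
  μ_irrefl v := by simp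

end FuzzyGraph


/-!
Every edge of a complete fuzzy graph is strong: no walk between `u` and `v` is stronger than
`σ u ∧ σ v`, which the edge itself attains. Hence a vertex `v₀` minimising `μ_s` strongly
dominates all others, and labelling it `2` and everything else `0` costs `2 μ_s(v₀)`.
Conversely, an SNRDF either labels some vertex `2`, costing at least `2 μ_s(v₀)`, or labels
every vertex at least `1`, and then two distinct vertices already cost that much.
-/

namespace FuzzyGraph

variable {V : Type*} (G : FuzzyGraph V)

lemma walkStrength_cons_cons (a b : V) (t : List V) :
    G.walkStrength (a :: b :: t) = min (G.μ a b) (G.walkStrength (b :: t)) := by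
  simp [walkStrength]

lemma walkStrength_le_σ_of_mem :
    ∀ {l : List V}, 2 ≤ l.length → ∀ {x : V}, x ∈ l → G.walkStrength l ≤ G.σ x
  | [], hl, _, _ | [_], hl, _, _ => by simp at hl
  | a :: b :: t, _, x, hx => by
    rw [walkStrength_cons_cons]
    have hab : G.μ a b ≤ min (G.σ a) (G.σ b) := G.μ_le a b
    rcases List.mem_cons.1 hx with rfl | hx
    · exact (min_le_left _ _).trans (hab.trans (min_le_left _ _))
    · cases t with
      | nil =>
        obtain rfl := List.mem_singleton.1 hx
        exact (min_le_left _ _).trans (hab.trans (min_le_right _ _))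
      | cons c t => exact (min_le_right _ _).trans (walkStrength_le_σ_of_mem (by simp) hx)

lemma walkStrength_pair (u v : V) : G.walkStrength [u, v] = G.μ u v := by
  have : G.μ u v ≤ 1 := (G.μ_le u v).trans ((min_le_left _ _).trans (G.σ_le_one u))
  simp [walkStrength, this]

lemma strongEdge_of_eq_min {u v : V} (hpos : 0 < G.μ u v)
    (hμ : G.μ u v = min (G.σ u) (G.σ v)) : G.StrongEdge u v := by
  refine ⟨hpos, (IsGreatest.csSup_eq ⟨?_, ?_⟩).symm⟩
  · exact ⟨[u, v], ⟨rfl, rfl, List.isChain_pair.2 hpos⟩, le_rfl, (G.walkStrength_pair u v).symm⟩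
  · rintro _ ⟨l, ⟨hhead, hlast, -⟩, hlen, rfl⟩
    rw [hμ, le_min_iff]
    exact ⟨G.walkStrength_le_σ_of_mem hlen (List.mem_of_mem_head? hhead),
      G.walkStrength_le_σ_of_mem hlen (List.mem_of_getLast? hlast)⟩

lemma mus_nonneg (u : V) : 0 ≤ G.mus u :=
  Real.sInf_nonneg fun _ ⟨v, _, hx⟩ => hx ▸ G.μ_nonneg u v

lemma isSNRDF_single {v₀ : V} (h : ∀ v, v ≠ v₀ → G.StrongEdge v v₀) :
    G.IsSNRDF (Pi.single v₀ 2) := by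
  refine ⟨fun v => ?_, fun v hv => ⟨v₀, h v fun hv₀ => ?_, Pi.single_eq_same _ _⟩⟩
  · by_cases hv : v = v₀
    · simp [hv]
    · simp [Pi.single_eq_of_ne hv]
  · simp [hv₀] at hv

section Roman

variable [Fintype V]

lemma snrdfWeight_single (v₀ : V) : G.snrdfWeight (Pi.single v₀ 2) = 2 * G.mus v₀ := by
  rw [snrdfWeight, Finset.sum_eq_single v₀ (fun v _ hv => by simp [Pi.single_eq_of_ne hv])
    (fun h => absurd (Finset.mem_univ v₀) h)]
  simp

lemma two_mul_le_snrdfWeight (hV : 1 < Fintype.card V) {f : V → ℕ} (hf : G.IsSNRDF f)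
    {m : ℝ} (hm : ∀ v, m ≤ G.mus v) : 2 * m ≤ G.snrdfWeight f := by
  have hterm : ∀ v, 0 ≤ (f v : ℝ) * G.mus v := fun v =>
    mul_nonneg (Nat.cast_nonneg _) (G.mus_nonneg v)
  by_cases h2 : ∃ v, f v = 2
  · obtain ⟨v, hv⟩ := h2
    calc 2 * m ≤ (f v : ℝ) * G.mus v := by rw [hv]; push_cast; linarith [hm v]
      _ ≤ G.snrdfWeight f := Finset.single_le_sum (fun v _ => hterm v) (Finset.mem_univ v)
  · push Not at h2
    have hpos : ∀ v, 1 ≤ (f v : ℝ) := fun v => by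
      have : f v ≠ 0 := fun h0 => by obtain ⟨u, -, hu⟩ := hf.2 v h0; exact h2 u hu
      exact_mod_cast Nat.one_le_iff_ne_zero.2 this
    have hle : ∀ v, m ≤ (f v : ℝ) * G.mus v := fun v =>
      (hm v).trans (le_mul_of_one_le_left (G.mus_nonneg v) (hpos v))
    obtain ⟨a, b, hab⟩ := Fintype.exists_pair_of_one_lt_card hV
    calc 2 * m ≤ ∑ v ∈ {a, b}, (f v : ℝ) * G.mus v := by
          rw [Finset.sum_pair hab]; linarith [hle a, hle b]
      _ ≤ G.snrdfWeight f :=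
          Finset.sum_le_sum_of_subset_of_nonneg (Finset.subset_univ _) fun v _ _ => hterm v

lemma gammaSnR_eq_two_mul_mus (hV : 1 < Fintype.card V) {v₀ : V}
    (hdom : ∀ v, v ≠ v₀ → G.StrongEdge v v₀) (hmin : ∀ v, G.mus v₀ ≤ G.mus v) :
    G.gammaSnR = 2 * G.mus v₀ :=
  IsLeast.csInf_eq ⟨⟨_, G.isSNRDF_single hdom, (G.snrdfWeight_single v₀).symm⟩,
    fun _ ⟨_, hf, hw⟩ => hw ▸ G.two_mul_le_snrdfWeight hV hf hmin⟩

end Roman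

end FuzzyGraph

/-- for a complete fuzzy graph on at least two vertices,
`γ_snR(K_n) = 2·min{μ_s(v) : v ∈ V}`. -/
theorem gammaSnR_complete {V : Type*} [Fintype V]
    (G : FuzzyGraph V) (hn : 2 ≤ Fintype.card V)
    (hσ : ∀ v, 0 < G.σ v)
    (hc : ∀ u v : V, u ≠ v → G.μ u v = min (G.σ u) (G.σ v)) :
    G.gammaSnR = 2 * sInf {x | ∃ v : V, x = G.mus v} := by
  have : Nonempty V := Fintype.card_pos_iff.1 (by omega)
  obtain ⟨v₀, hmin⟩ := Finite.exists_min G.mus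
  have hstrong : ∀ v, v ≠ v₀ → G.StrongEdge v v₀ := fun v hv =>
    G.strongEdge_of_eq_min (hc v v₀ hv ▸ lt_min (hσ v) (hσ v₀)) (hc v v₀ hv)
  have hinf : sInf {x | ∃ v : V, x = G.mus v} = G.mus v₀ :=
    IsLeast.csInf_eq ⟨⟨v₀, rfl⟩, fun _ ⟨v, hv⟩ => hv ▸ hmin v⟩
  rw [hinf, G.gammaSnR_eq_two_mul_mus hn hstrong hmin]
end
end

section
/- Let C_n be a fuzzy strong cycle (all edges strong) u_1,...,u_n,u_1 of size q, and let μ_min, μ_max be the minimum and maximum edge memberships. Then Σ_{i=1}^n μ_s(u_i) ≤ q − (μ_max − μ_min), where μ_s(u_i) is the smaller of the two memberships of the edges incident to u_i. -/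
noncomputable section
open scoped Classical
open Finset

/-!
Since the reverse of a strong edge is strong, `μ_s(u_{i+1}) ≤ min (μ_i, μ_{i+1})` for the edge
memberships `μ_i = μ(u_i, u_{i+1})`. Writing `min a b = b - (b - a)⁺`, the sum of these minima is
`q` minus the sum of the positive increments `(μ_{i+1} - μ_i)⁺` around the cycle, and telescoping
along the arc from a minimal to a maximal edge shows that this sum is at least `μ_max - μ_min`.
-/

theorem List.zip_tail_eq_dropLast_zip {α : Type*} (l : List α) :
    l.zip l.tail = l.dropLast.zip l.tail := by
  rw [zip_eq_zip_take_min, zip_eq_zip_take_min (l₁ := l.dropLast)]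
  simp [dropLast_eq_take, take_take]

theorem List.reverse_zip_tail {α : Type*} (l : List α) :
    l.reverse.zip l.reverse.tail = ((l.zip l.tail).map Prod.swap).reverse := by
  rw [zip_tail_eq_dropLast_zip, zip_tail_eq_dropLast_zip, zip_swap, zip_eq_zipWith,
    zip_eq_zipWith, reverse_zipWith (by simp)]
  simp

theorem sub_le_sum_range_posPart_sub {α : Type*} [AddCommGroup α] [LinearOrder α]
    [IsOrderedAddMonoid α] (g : ℕ → α) {d m : ℕ} (hdm : d ≤ m) :
    g d - g 0 ≤ ∑ t ∈ range m, (g (t + 1) - g t)⁺ :=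
  calc g d - g 0 = ∑ t ∈ range d, (g (t + 1) - g t) := (sum_range_sub g d).symm
    _ ≤ ∑ t ∈ range d, (g (t + 1) - g t)⁺ := sum_le_sum fun _ _ => le_posPart _
    _ ≤ ∑ t ∈ range m, (g (t + 1) - g t)⁺ :=
      sum_le_sum_of_subset_of_nonneg (range_subset_range.mpr hdm) fun _ _ _ => posPart_nonneg _

namespace Fin

open Fin.NatCast Fin.CommRing

variable {α : Type*} [AddCommGroup α] [LinearOrder α] [IsOrderedAddMonoid α]
  {n : ℕ} [NeZero n]

theorem sub_le_sum_posPart_sub (w : Fin n → α) (j k : Fin n) :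
    w k - w j ≤ ∑ i, (w (i + 1) - w i)⁺ := by
  have hk : j + ((k - j : Fin n).val : Fin n) = k := by
    rw [cast_val_eq_self]; ring
  calc w k - w j = w (j + ((k - j : Fin n).val : Fin n)) - w (j + ((0 : ℕ) : Fin n)) := by
        rw [hk, Nat.cast_zero, add_zero]
    _ ≤ ∑ t ∈ range n, (w (j + ((t + 1 : ℕ) : Fin n)) - w (j + (t : Fin n)))⁺ :=
        sub_le_sum_range_posPart_sub (fun t => w (j + (t : Fin n))) (k - j).isLt.le
    _ = ∑ i : Fin n, (w (j + i + 1) - w (j + i))⁺ := by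
        rw [← sum_univ_eq_sum_range]
        simp only [Nat.cast_succ, cast_val_eq_self, add_assoc]
    _ = ∑ i, (w (i + 1) - w i)⁺ := Equiv.sum_comp (Equiv.addLeft j) fun i => (w (i + 1) - w i)⁺

theorem sum_min_succ_le (w : Fin n → α) (j k : Fin n) :
    ∑ i, min (w i) (w (i + 1)) ≤ ∑ i, w i - (w k - w j) := by
  have hmin : ∀ a b : α, min a b = b - (b - a)⁺ := fun a b =>
    (min_comm a b).trans (inf_eq_sub_posPart_sub b a)
  have hshift : ∑ i, w (i + 1) = ∑ i, w i := Equiv.sum_comp (Equiv.addRight 1) w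
  calc ∑ i, min (w i) (w (i + 1)) = ∑ i, w i - ∑ i, (w (i + 1) - w i)⁺ := by
        simp only [hmin, sum_sub_distrib, hshift]
    _ ≤ ∑ i, w i - (w k - w j) := sub_le_sub_left (sub_le_sum_posPart_sub w j k) _

end Fin

namespace FuzzyGraph

variable {V : Type*} (G : FuzzyGraph V)

theorem walkStrength_reverse (l : List V) : G.walkStrength l.reverse = G.walkStrength l := by
  have hswap : (fun p : V × V => G.μ p.1 p.2) ∘ Prod.swap = fun p => G.μ p.1 p.2 :=
    funext fun p => G.μ_symm p.2 p.1
  rw [walkStrength, walkStrength, List.reverse_zip_tail, List.map_reverse, List.map_map, hswap]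
  exact (List.reverse_perm _).foldr_eq 1

theorem IsWalk.reverse {u v : V} {l : List V} (h : G.IsWalk u v l) : G.IsWalk v u l.reverse := by
  obtain ⟨hhead, hlast, hchain⟩ := h
  refine ⟨by rwa [List.head?_reverse], by rwa [List.getLast?_reverse], ?_⟩
  rw [List.Chain', List.isChain_reverse]
  exact hchain.imp fun a b hab => (G.μ_symm b a).trans_gt hab

theorem conn_comm (u v : V) : G.conn u v = G.conn v u := by
  have hrev : ∀ {u v s}, (∃ l, G.IsWalk u v l ∧ 2 ≤ l.length ∧ s = G.walkStrength l) →
      ∃ l, G.IsWalk v u l ∧ 2 ≤ l.length ∧ s = G.walkStrength l := by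
    rintro u v _ ⟨l, hl, hlen, rfl⟩
    exact ⟨l.reverse, hl.reverse, by rwa [List.length_reverse], (G.walkStrength_reverse l).symm⟩
  exact congrArg sSup (Set.ext fun _ => ⟨hrev, hrev⟩)

theorem StrongEdge.symm {G : FuzzyGraph V} {u v : V} (h : G.StrongEdge u v) : G.StrongEdge v u :=
  ⟨G.μ_symm v u ▸ h.1, by rw [G.μ_symm v u, G.conn_comm v u]; exact h.2⟩

theorem mus_le_of_strongEdge {u v : V} (h : G.StrongEdge u v) : G.mus u ≤ G.μ u v :=
  csInf_le ⟨0, by rintro _ ⟨w, -, rfl⟩; exact G.μ_nonneg u w⟩ ⟨v, h, rfl⟩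

end FuzzyGraph

theorem sum_mus_le_of_strong_cycle_general {n : ℕ} [NeZero n]
    (G : FuzzyGraph (Fin n))
    (hstrong : ∀ i : Fin n, G.StrongEdge i (i + 1)) :
    ∑ i : Fin n, G.mus i ≤
      (∑ i : Fin n, G.μ i (i + 1)) -
        (sSup {x | ∃ i : Fin n, x = G.μ i (i + 1)} -
          sInf {x | ∃ i : Fin n, x = G.μ i (i + 1)}) := by
  set w : Fin n → ℝ := fun i => G.μ i (i + 1)
  have hmus : ∀ i, G.mus (i + 1) ≤ min (w i) (w (i + 1)) := fun i =>
    le_min ((G.mus_le_of_strongEdge (hstrong i).symm).trans_eq (G.μ_symm _ _))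
      (G.mus_le_of_strongEdge (hstrong (i + 1)))
  have hrange : {x | ∃ i : Fin n, x = w i} = Set.range w := by
    ext x; exact exists_congr fun i => eq_comm
  have hne : (Set.range w).Nonempty := Set.range_nonempty w
  obtain ⟨k, hk⟩ := hne.csSup_mem (Set.finite_range w)
  obtain ⟨j, hj⟩ := hne.csInf_mem (Set.finite_range w)
  rw [hrange, ← hk, ← hj]
  calc ∑ i, G.mus i = ∑ i, G.mus (i + 1) := (Equiv.sum_comp (Equiv.addRight 1) G.mus).symm
    _ ≤ ∑ i, min (w i) (w (i + 1)) := sum_le_sum fun i _ => hmus i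
    _ ≤ ∑ i, w i - (w k - w j) := Fin.sum_min_succ_le w j k

/-- for a fuzzy strong cycle,
`Σ μ_s(u_i) ≤ q − (μ_max − μ_min)`. -/
theorem sum_mus_le_of_strong_cycle {n : ℕ} [NeZero n] (hn : 3 ≤ n)
    (G : FuzzyGraph (Fin n))
    (hadj : ∀ i j : Fin n, 0 < G.μ i j ↔ (j = i + 1 ∨ i = j + 1))
    (hstrong : ∀ i : Fin n, G.StrongEdge i (i + 1)) :
    ∑ i : Fin n, G.mus i ≤
      (∑ i : Fin n, G.μ i (i + 1)) -
        (sSup {x | ∃ i : Fin n, x = G.μ i (i + 1)} -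
          sInf {x | ∃ i : Fin n, x = G.μ i (i + 1)}) :=
  sum_mus_le_of_strong_cycle_general G hstrong
end
end
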